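/- arXiv:0910.5599 — 2 statements merged into one kernel-verified Lean document; each statement's English description precedes it below -/
import Mathlib

section
/- Suppose a greedy procedure repeatedly picks a set C from a finite collection C^+ maximizing (1/w_C) * sum_{i in S \ remaining uncovered elements, i in C} y_i, where the fractional optimum OPT* satisfies sum_{i in S} y_i <= OPT* * max_{C in C^+} (1/w_C) sum_{i in S cap C} y_i (pigeonhole from a fractional cover). Then after the greedy sets have total weight at least ln(rho) * OPT*, the remaining uncovered elements S' satisfy sum_{i in S'} y_i <= (1/rho) * sum_{i in I} y_i. -/
/-!
Write `T k` for the `y`-mass still uncovered after `k` greedy steps. The greedy choice removes at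
least a `w (C (k + 1)) / OPT*` fraction of `T k`, so `T (k + 1) ≤ (1 - w / OPT*) T k ≤ exp (-w / OPT*) T k`.
Iterating gives `T K ≤ exp (-(total greedy weight) / OPT*) T 0`, which is at most `T 0 / ρ` once the
total greedy weight reaches `log ρ · OPT*`.
-/

open Finset

lemma div_mul_le_of_one_div_mul_le {a b t s : ℝ} (ha : 0 < a) (ht : 0 ≤ t) (hs : 0 ≤ s)
    (h : 1 / a * t ≤ 1 / b * s) : b / a * t ≤ s := by
  rcases le_or_gt b 0 with hb | hb
  · exact (mul_nonpos_of_nonpos_of_nonneg (div_nonpos_of_nonpos_of_nonneg hb ha.le) ht).trans hs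
  · rw [one_div_mul_eq_div, one_div_mul_eq_div, div_le_div_iff₀ ha hb] at h
    rw [div_mul_eq_mul_div, div_le_iff₀ ha]
    linarith

lemma sum_sdiff_le_exp_neg_mul_sum {ι : Type*} [DecidableEq ι] {y : ι → ℝ} (hy : ∀ i, 0 ≤ y i)
    {s c : Finset ι} {a b : ℝ} (ha : 0 < a)
    (h : 1 / a * ∑ i ∈ s, y i ≤ 1 / b * ∑ i ∈ s ∩ c, y i) :
    ∑ i ∈ s \ c, y i ≤ Real.exp (-(b / a)) * ∑ i ∈ s, y i := by
  have hs : 0 ≤ ∑ i ∈ s, y i := sum_nonneg fun i _ => hy i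
  have hcovered : b / a * ∑ i ∈ s, y i ≤ ∑ i ∈ s ∩ c, y i :=
    div_mul_le_of_one_div_mul_le ha hs (sum_nonneg fun i _ => hy i) h
  have hsplit : ∑ i ∈ s \ c, y i = ∑ i ∈ s, y i - ∑ i ∈ s ∩ c, y i := by
    rw [← sdiff_inter_self_left, sum_sdiff_eq_sub inter_subset_left]
  calc ∑ i ∈ s \ c, y i ≤ (1 - b / a) * ∑ i ∈ s, y i := by rw [hsplit]; linarith
    _ ≤ Real.exp (-(b / a)) * ∑ i ∈ s, y i :=
      mul_le_mul_of_nonneg_right (Real.one_sub_le_exp_neg _) hs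

lemma le_exp_neg_sum_mul_of_le_exp_neg_mul {T c : ℕ → ℝ}
    (hstep : ∀ k, T (k + 1) ≤ Real.exp (-c (k + 1)) * T k) (K : ℕ) :
    T K ≤ Real.exp (-∑ q ∈ Icc 1 K, c q) * T 0 := by
  induction K with
  | zero => simp
  | succ n ih =>
    calc T (n + 1) ≤ Real.exp (-c (n + 1)) * T n := hstep n
      _ ≤ Real.exp (-c (n + 1)) * (Real.exp (-∑ q ∈ Icc 1 n, c q) * T 0) :=
        mul_le_mul_of_nonneg_left ih (Real.exp_pos _).le
      _ = Real.exp (-∑ q ∈ Icc 1 (n + 1), c q) * T 0 := by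
        rw [sum_Icc_succ_top (by omega), ← mul_assoc, ← Real.exp_add, neg_add, add_comm]

lemma exp_neg_div_le_one_div {W a ρ : ℝ} (ha : 0 < a) (hρ : 0 < ρ) (h : Real.log ρ * a ≤ W) :
    Real.exp (-(W / a)) ≤ 1 / ρ := by
  rw [one_div, ← Real.exp_log hρ, ← Real.exp_neg, Real.exp_le_exp, neg_le_neg_iff,
    le_div_iff₀ ha]
  exact h

theorem stmt2_general {ι : Type*} [DecidableEq ι] (I : Finset ι) (y : ι → ℝ) (hy : ∀ i, 0 ≤ y i)
    (w : Finset ι → ℝ)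
    (OPTstar rho : ℝ) (hOPT : 0 < OPTstar) (hrho : 1 ≤ rho)
    (S : ℕ → Finset ι) (C : ℕ → Finset ι) (hS0 : S 0 = I)
    (hSrec : ∀ k, S (k + 1) = S k \ C (k + 1))
    (hgreedy : ∀ k, (1 / OPTstar) * ∑ i ∈ S k, y i ≤
      (1 / w (C (k + 1))) * ∑ i ∈ S k ∩ C (k + 1), y i)
    (K : ℕ) (hweight : Real.log rho * OPTstar ≤ ∑ q ∈ Finset.Icc 1 K, w (C q)) :
    ∑ i ∈ S K, y i ≤ (1 / rho) * ∑ i ∈ I, y i := by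
  have hstep (k : ℕ) : ∑ i ∈ S (k + 1), y i ≤
      Real.exp (-(w (C (k + 1)) / OPTstar)) * ∑ i ∈ S k, y i := by
    rw [hSrec k]
    exact sum_sdiff_le_exp_neg_mul_sum hy hOPT (hgreedy k)
  have hdecay := le_exp_neg_sum_mul_of_le_exp_neg_mul (T := fun k => ∑ i ∈ S k, y i)
    (c := fun q => w (C q) / OPTstar) hstep K
  rw [← sum_div, hS0] at hdecay
  exact hdecay.trans <| mul_le_mul_of_nonneg_right
    (exp_neg_div_le_one_div hOPT (by linarith) hweight) (sum_nonneg fun i _ => hy i)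

/-- Core claim in the proof of Theorem 2: after the greedy sets have total weight at least
`log rho * OPT*`, the uncovered elements carry at most a `1/rho` fraction of the dual mass. -/
theorem stmt2 {ι : Type*} [DecidableEq ι] (I : Finset ι) (y : ι → ℝ) (hy : ∀ i, 0 ≤ y i)
    (𝒞 : Finset (Finset ι)) (w : Finset ι → ℝ) (hw : ∀ C ∈ 𝒞, 0 < w C)
    (OPTstar rho : ℝ) (hOPT : 0 < OPTstar) (hrho : 1 ≤ rho)
    (S : ℕ → Finset ι) (C : ℕ → Finset ι) (hS0 : S 0 = I)
    (hC : ∀ k, C (k + 1) ∈ 𝒞)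
    (hSrec : ∀ k, S (k + 1) = S k \ C (k + 1))
    (hgreedy : ∀ k, (1 / OPTstar) * ∑ i ∈ S k, y i ≤
      (1 / w (C (k + 1))) * ∑ i ∈ S k ∩ C (k + 1), y i)
    (K : ℕ) (hweight : Real.log rho * OPTstar ≤ ∑ q ∈ Finset.Icc 1 K, w (C q)) :
    ∑ i ∈ S K, y i ≤ (1 / rho) * ∑ i ∈ I, y i :=
  stmt2_general I y hy w OPTstar rho hOPT hrho S C hS0 hSrec hgreedy K hweight
end

section
/- Let y_i = effective_load(i)/D where effective_load(i) = min over incarnations j and bin types t of w_t * max_d (a_{ijd}/b_{td}). Then y is a feasible dual solution: for every compatible set C (a set of items with chosen incarnations j'(i) fitting in one bin of type t, i.e., sum_{i in C} a_{i j'(i) d} <= b_{td} for all d in [D]), we have sum_{i in C} y_i <= w_t. -/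
open Finset

/-- The effective load of item `i`: the minimum over incarnations `j` and bin types `t` of
`w t * max_d (a i j d / b t d)`. Here there are `m+1` incarnations, `T+1` bin types and
`D+1` dimensions. -/
noncomputable def effLoad (D m T : ℕ) {ι : Type*}
    (a : ι → Fin (m + 1) → Fin (D + 1) → ℝ) (b : Fin (T + 1) → Fin (D + 1) → ℝ)
    (w : Fin (T + 1) → ℝ) (i : ι) : ℝ :=
  Finset.univ.inf' Finset.univ_nonempty fun jt : Fin (m + 1) × Fin (T + 1) =>
    w jt.2 * (Finset.univ.sup' Finset.univ_nonempty fun d : Fin (D + 1) =>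
      a i jt.1 d / b jt.2 d)

lemma Finset.sup'_le_sum_of_nonneg {κ : Type*} {s : Finset κ} (hs : s.Nonempty) {f : κ → ℝ}
    (hf : ∀ k ∈ s, 0 ≤ f k) : s.sup' hs f ≤ ∑ k ∈ s, f k :=
  Finset.sup'_le hs f fun _ hk => Finset.single_le_sum hf hk

lemma sum_sum_div_le_card {ι κ : Type*} [Fintype κ] (C : Finset ι) (f : ι → κ → ℝ)
    {c : κ → ℝ} (hc : ∀ k, 0 < c k) (hfit : ∀ k, ∑ i ∈ C, f i k ≤ c k) :
    ∑ i ∈ C, ∑ k, f i k / c k ≤ Fintype.card κ :=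
  calc ∑ i ∈ C, ∑ k, f i k / c k = ∑ k, (∑ i ∈ C, f i k) / c k := by
        rw [Finset.sum_comm]
        simp only [Finset.sum_div]
    _ ≤ ∑ _k : κ, (1 : ℝ) := Finset.sum_le_sum fun k _ => (div_le_one (hc k)).2 (hfit k)
    _ = Fintype.card κ := by simp

/- Bounding the maximum load by the sum of the loads replaces the paper's grouping of the
items by their maximum-load dimension: both give at most one unit of load per dimension. -/
lemma effLoad_le_mul_sum_div (D m T : ℕ) {ι : Type*}
    (a : ι → Fin (m + 1) → Fin (D + 1) → ℝ) (b : Fin (T + 1) → Fin (D + 1) → ℝ)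
    (w : Fin (T + 1) → ℝ) (i : ι) (j : Fin (m + 1)) (t : Fin (T + 1))
    (ha : ∀ d, 0 ≤ a i j d) (hb : ∀ d, 0 ≤ b t d) (hwt : 0 ≤ w t) :
    effLoad D m T a b w i ≤ w t * ∑ d, a i j d / b t d :=
  calc effLoad D m T a b w i
      ≤ w t * Finset.univ.sup' Finset.univ_nonempty fun d => a i j d / b t d :=
        Finset.inf'_le _ (Finset.mem_univ (j, t))
    _ ≤ w t * ∑ d, a i j d / b t d := by
        gcongr
        exact Finset.sup'_le_sum_of_nonneg _ fun d _ => div_nonneg (ha d) (hb d)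

theorem stmt6_general (D m T : ℕ) {ι : Type*}
    (a : ι → Fin (m + 1) → Fin (D + 1) → ℝ) (b : Fin (T + 1) → Fin (D + 1) → ℝ)
    (w : Fin (T + 1) → ℝ)
    (ha : ∀ i j d, 0 < a i j d) (hb : ∀ t d, 0 < b t d) (hw : ∀ t, 0 < w t)
    (C : Finset ι) (t : Fin (T + 1)) (j' : ι → Fin (m + 1))
    (hcompat : ∀ d, ∑ i ∈ C, a i (j' i) d ≤ b t d) :
    ∑ i ∈ C, effLoad D m T a b w i / ((D : ℝ) + 1) ≤ w t := by
  have hload : ∑ i ∈ C, effLoad D m T a b w i ≤ w t * ((D : ℝ) + 1) :=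
    calc ∑ i ∈ C, effLoad D m T a b w i
        ≤ ∑ i ∈ C, w t * ∑ d, a i (j' i) d / b t d :=
          Finset.sum_le_sum fun i _ => effLoad_le_mul_sum_div D m T a b w i (j' i) t
            (fun d => (ha i (j' i) d).le) (fun d => (hb t d).le) (hw t).le
      _ = w t * ∑ i ∈ C, ∑ d, a i (j' i) d / b t d := (Finset.mul_sum ..).symm
      _ ≤ w t * ((D : ℝ) + 1) := by
          gcongr
          · exact (hw t).le
          simpa using sum_sum_div_le_card C (fun i d => a i (j' i) d) (hb t) hcompat
  rw [← Finset.sum_div, div_le_iff₀ (by positivity)]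
  exact hload

/-- Dual feasibility in the proof of Lemma 1: with `y i = effLoad i / D`, for every
compatible set `C` (fitting in one bin of type `t` via incarnations `j'`),
`∑_{i ∈ C} y i ≤ w t`. -/
theorem stmt6 (D m T : ℕ) {ι : Type*} [DecidableEq ι]
    (a : ι → Fin (m + 1) → Fin (D + 1) → ℝ) (b : Fin (T + 1) → Fin (D + 1) → ℝ)
    (w : Fin (T + 1) → ℝ)
    (ha : ∀ i j d, 0 < a i j d) (hb : ∀ t d, 0 < b t d) (hw : ∀ t, 0 < w t)
    (C : Finset ι) (t : Fin (T + 1)) (j' : ι → Fin (m + 1))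
    (hcompat : ∀ d, ∑ i ∈ C, a i (j' i) d ≤ b t d) :
    ∑ i ∈ C, effLoad D m T a b w i / ((D : ℝ) + 1) ≤ w t :=
  stmt6_general D m T a b w ha hb hw C t j' hcompat
end
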